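/- Subsumption of acyclic MRSs is well-founded: if σ ⊏ ρ for acyclic MRSs then rank(σ) < rank(ρ), where rank(σ) = |Π(σ)| + Σ_{(π,i)∈Π(σ)} r(θ(δ(q̄_i,π))) + (|Π(σ)| − |Q_σ|); consequently there is no infinite strictly decreasing chain of acyclic MRSs. -/

import Mathlib

/-! Multi-rooted feature structures (MRSs).
`pathδ` extends the partial transition function `δ` to paths (lists of features). -/

variable {Nodes Feats Types : Type}

def pathδ (δ : Nodes → Feats → Option Nodes) : Nodes → List Feats → Option Nodes
  | q, [] => some q
  | q, f :: π => (δ q f).bind fun q' => pathδ δ q' π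

/-- A multi-rooted feature structure: a finite set of nodes `Q`, an ordered
repetition-free list of roots, and a partial transition function `δ : Q × Feats ⇀ Q`,
with every node reachable from some root. -/
structure MRS (Nodes Feats : Type) where
  Q : Finset Nodes
  roots : List Nodes
  nodup : roots.Nodup
  roots_mem : ∀ q ∈ roots, q ∈ Q
  δ : Nodes → Feats → Option Nodes
  dom : ∀ q f, (δ q f).isSome → q ∈ Q
  closed : ∀ q f q', δ q f = some q' → q' ∈ Q
  reach : ∀ q ∈ Q, ∃ (i : ℕ) (π : List Feats) (r : Nodes),
    roots[i]? = some r ∧ pathδ δ r π = some q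

/-- The node reached by following path `π` from the `i`-th root (if defined). -/
def MRS.pathFrom (σ : MRS Nodes Feats) (i : ℕ) (π : List Feats) : Option Nodes :=
  (σ.roots[i]?).bind fun r => pathδ σ.δ r π

/-- `Π(σ) = {(π, i) | δ_σ(q̄_i, π) is defined}`. -/
def MRS.Pi (σ : MRS Nodes Feats) : Set (List Feats × ℕ) :=
  {p | (σ.pathFrom p.2 p.1).isSome}

/-- An MRS is cyclic if some node returns to itself along a nonempty path. -/
def MRS.Cyclic (σ : MRS Nodes Feats) : Prop :=
  ∃ q ∈ σ.Q, ∃ α : List Feats, α ≠ [] ∧ pathδ σ.δ q α = some q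

def MRS.Acyclic (σ : MRS Nodes Feats) : Prop := ¬ σ.Cyclic

/-- An MRS subsumption morphism: maps the `i`-th root to the `i`-th root (so the
numbers of roots agree), maps `Q_σ` into `Q_ρ`, is monotone on node types, and
commutes with the transition function. -/
def MRSIsMorphism [PartialOrder Types] (θ : Nodes → Types)
    (σ ρ : MRS Nodes Feats) (h : Nodes → Nodes) : Prop :=
  ρ.roots = σ.roots.map h ∧ (∀ q ∈ σ.Q, h q ∈ ρ.Q) ∧ (∀ q ∈ σ.Q, θ q ≤ θ (h q)) ∧
  ∀ q f q', σ.δ q f = some q' → ρ.δ (h q) f = some (h q')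

def MRSSubsumes [PartialOrder Types] (θ : Nodes → Types) (σ ρ : MRS Nodes Feats) : Prop :=
  ∃ h, MRSIsMorphism θ σ ρ h

def MRSStrictlySubsumes [PartialOrder Types] (θ : Nodes → Types)
    (σ ρ : MRS Nodes Feats) : Prop :=
  MRSSubsumes θ σ ρ ∧ ¬ MRSSubsumes θ ρ σ

/-- `rank(σ) = |Π(σ)| + Θ(σ) + (|Π(σ)| − |Q_σ|)` (computed in `ℤ`), where `Θ(σ)`
sums the `r`-rank of the type of the node reached by each root-path pair. -/
noncomputable def MRS.rank (r : Types → ℕ) (θ : Nodes → Types) (σ : MRS Nodes Feats) : ℤ :=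
  (σ.Pi.ncard : ℤ) +
    ((∑ᶠ p ∈ σ.Pi, (σ.pathFrom p.2 p.1).elim 0 fun q => r (θ q) : ℕ) : ℤ) +
    ((σ.Pi.ncard : ℤ) - (σ.Q.card : ℤ))

/-! A morphism `h : σ → ρ` carries every root-path pair of `σ` to one of `ρ`, so `Π(σ) ⊆ Π(ρ)`,
and it can only raise the type reached along each path, so the first two terms of the rank
grow. Every node of `ρ` outside `h(Q_σ)` ends a path in `Π(ρ) \ Π(σ)`, hence
`|Q_ρ| - |Q_σ| ≤ |Π(ρ)| - |Π(σ)|` and the third term grows too. If the ranks agree, all three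
inequalities are equalities: `Π(σ) = Π(ρ)`, `h` preserves types, and `h` is onto `Q_ρ`, hence
bijective since `|Q_σ| = |Q_ρ|`; its inverse is then a morphism `ρ → σ`.

For acyclic MRSs a pigeonhole argument bounds path lengths by `|Q|`, so `Π` is finite and the rank
is a natural number, which rules out infinite strictly decreasing chains. -/

theorem Set.ncard_le_ncard_of_forall_exists_eq_some {α β : Type*} {s : Set α} {t : Set β}
    (g : α → Option β) (hs : s.Finite) (ht : ∀ b ∈ t, ∃ a ∈ s, g a = some b) :
    t.ncard ≤ s.ncard :=
  calc t.ncard = (some '' t).ncard :=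
        (Set.ncard_image_of_injective _ (Option.some_injective _)).symm
    _ ≤ (g '' s).ncard := by
      refine Set.ncard_le_ncard ?_ (hs.image g)
      rintro _ ⟨b, hb, rfl⟩
      exact ht b hb
    _ ≤ s.ncard := Set.ncard_image_le hs

theorem pathδ_append (δ : Nodes → Feats → Option Nodes) (q : Nodes) (π π' : List Feats) :
    pathδ δ q (π ++ π') = (pathδ δ q π).bind fun q' => pathδ δ q' π' := by
  induction π generalizing q with
  | nil => rfl
  | cons f π ih => simp [pathδ, ih, Option.bind_assoc]

theorem isSome_pathδ_take {δ : Nodes → Feats → Option Nodes} {q q' : Nodes} {π : List Feats}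
    (h : pathδ δ q π = some q') (j : ℕ) : (pathδ δ q (π.take j)).isSome := by
  rw [← List.take_append_drop j π, pathδ_append] at h
  obtain ⟨a, ha, -⟩ := Option.bind_eq_some_iff.mp h
  simp [ha]

namespace MRS

variable (σ : MRS Nodes Feats)

theorem mem_Q_of_pathδ {q q' : Nodes} {π : List Feats} (hq : q ∈ σ.Q)
    (h : pathδ σ.δ q π = some q') : q' ∈ σ.Q := by
  induction π generalizing q with
  | nil => exact Option.some_injective _ h ▸ hq
  | cons f π ih =>
    obtain ⟨a, ha, h⟩ := Option.bind_eq_some_iff.mp h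
    exact ih (σ.closed q f a ha) h

theorem mem_Q_of_pathFrom {i : ℕ} {π : List Feats} {q : Nodes}
    (h : σ.pathFrom i π = some q) : q ∈ σ.Q := by
  obtain ⟨r, hr, h⟩ := Option.bind_eq_some_iff.mp h
  exact σ.mem_Q_of_pathδ (σ.roots_mem r (List.mem_of_getElem? hr)) h

theorem pathFrom_append (i : ℕ) (π π' : List Feats) :
    σ.pathFrom i (π ++ π') = (σ.pathFrom i π).bind fun q => pathδ σ.δ q π' := by
  unfold pathFrom
  cases σ.roots[i]? <;> simp [pathδ_append]

theorem exists_mem_Pi_of_mem_Q {q : Nodes} (hq : q ∈ σ.Q) :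
    ∃ p ∈ σ.Pi, σ.pathFrom p.2 p.1 = some q := by
  obtain ⟨i, π, r, hr, h⟩ := σ.reach q hq
  have hp : σ.pathFrom i π = some q := by simp [pathFrom, hr, h]
  exact ⟨(π, i), by simp [Pi, hp], hp⟩

theorem card_Q_le_ncard_Pi (hσ : σ.Pi.Finite) : σ.Q.card ≤ σ.Pi.ncard := by
  rw [← Set.ncard_coe_finset]
  exact Set.ncard_le_ncard_of_forall_exists_eq_some _ hσ fun q hq => σ.exists_mem_Pi_of_mem_Q hq

variable {σ}

theorem Acyclic.pathδ_take_ne (hσ : σ.Acyclic) {q a b : Nodes} {π : List Feats} {j k : ℕ}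
    (hq : q ∈ σ.Q) (hjk : j < k) (hk : k ≤ π.length) (ha : pathδ σ.δ q (π.take j) = some a)
    (hb : pathδ σ.δ q (π.take k) = some b) : a ≠ b := by
  rintro rfl
  have hsplit : π.take k = π.take j ++ (π.take k).drop j := by
    conv_lhs => rw [← List.take_append_drop j (π.take k), List.take_take, min_eq_left hjk.le]
  refine hσ ⟨a, σ.mem_Q_of_pathδ hq ha, (π.take k).drop j, ?_, ?_⟩
  · simp only [ne_eq, List.drop_eq_nil_iff, List.length_take]
    omega
  · rwa [hsplit, pathδ_append, ha, Option.bind_some] at hb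

theorem Acyclic.length_lt_card (hσ : σ.Acyclic) {q q' : Nodes} {π : List Feats} (hq : q ∈ σ.Q)
    (hp : pathδ σ.δ q π = some q') : π.length < σ.Q.card := by
  let node j := (pathδ σ.δ q (π.take j)).get (isSome_pathδ_take hp j)
  have hnode j : pathδ σ.δ q (π.take j) = some (node j) := (Option.some_get _).symm
  have hinj : Set.InjOn node (Finset.range (π.length + 1)) := by
    intro j hj k hk hjk
    simp only [Finset.coe_range, Set.mem_Iio] at hj hk
    rcases lt_trichotomy j k with hlt | heq | hgt
    · exact absurd hjk (hσ.pathδ_take_ne hq hlt (by omega) (hnode j) (hnode k))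
    · exact heq
    · exact absurd hjk.symm (hσ.pathδ_take_ne hq hgt (by omega) (hnode k) (hnode j))
  simpa using Finset.card_le_card_of_injOn node
    (fun j _ => σ.mem_Q_of_pathδ hq (hnode j)) hinj

theorem Acyclic.finite_Pi [Finite Feats] (hσ : σ.Acyclic) : σ.Pi.Finite := by
  refine ((List.finite_length_le Feats σ.Q.card).prod (Set.finite_Iio σ.roots.length)).subset ?_
  rintro ⟨π, i⟩ hp
  obtain ⟨q, hq⟩ := Option.isSome_iff_exists.mp hp
  obtain ⟨r, hr, hpath⟩ := Option.bind_eq_some_iff.mp hq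
  exact ⟨(hσ.length_lt_card (σ.roots_mem r (List.mem_of_getElem? hr)) hpath).le,
    (List.getElem?_eq_some_iff.mp hr).1⟩

end MRS

def MRS.pathWeight (r : Types → ℕ) (θ : Nodes → Types) (σ : MRS Nodes Feats)
    (p : List Feats × ℕ) : ℕ :=
  (σ.pathFrom p.2 p.1).elim 0 fun q => r (θ q)

namespace MRS

variable (r : Types → ℕ) (θ : Nodes → Types) (σ : MRS Nodes Feats)

theorem support_pathWeight_subset : Function.support (σ.pathWeight r θ) ⊆ σ.Pi := by
  intro p hp
  cases h : σ.pathFrom p.2 p.1 with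
  | none => simp [pathWeight, h] at hp
  | some q => simp [Pi, h]

theorem rank_eq_sum {s : Finset (List Feats × ℕ)} (hs : σ.Pi ⊆ s) :
    σ.rank r θ = σ.Pi.ncard + ((∑ p ∈ s, σ.pathWeight r θ p : ℕ) : ℤ) +
      (σ.Pi.ncard - σ.Q.card) := by
  have hsupp := σ.support_pathWeight_subset r θ
  have hsum : ∑ᶠ p ∈ σ.Pi, σ.pathWeight r θ p = ∑ p ∈ s, σ.pathWeight r θ p :=
    finsum_mem_eq_sum_of_inter_support_eq _ <| by
      rw [Set.inter_eq_right.mpr hsupp, Set.inter_eq_right.mpr (hsupp.trans hs)]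
  rw [← hsum]
  rfl

theorem rank_nonneg (hσ : σ.Pi.Finite) : 0 ≤ σ.rank r θ := by
  have := σ.card_Q_le_ncard_Pi hσ
  unfold rank
  omega

end MRS

namespace MRSIsMorphism

variable [PartialOrder Types] {θ : Nodes → Types} {σ ρ : MRS Nodes Feats} {h : Nodes → Nodes}

theorem mapsTo (hm : MRSIsMorphism θ σ ρ h) : Set.MapsTo h σ.Q ρ.Q :=
  fun q hq => hm.2.1 q hq

theorem map_pathδ (hm : MRSIsMorphism θ σ ρ h) {q q' : Nodes} {π : List Feats}
    (hp : pathδ σ.δ q π = some q') : pathδ ρ.δ (h q) π = some (h q') := by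
  induction π generalizing q with
  | nil => simp_all [pathδ]
  | cons f π ih =>
    obtain ⟨a, ha, hp⟩ := Option.bind_eq_some_iff.mp hp
    exact Option.bind_eq_some_iff.mpr ⟨h a, hm.2.2.2 q f a ha, ih hp⟩

theorem map_pathFrom (hm : MRSIsMorphism θ σ ρ h) {i : ℕ} {π : List Feats} {q : Nodes}
    (hp : σ.pathFrom i π = some q) : ρ.pathFrom i π = some (h q) := by
  obtain ⟨r, hr, hp⟩ := Option.bind_eq_some_iff.mp hp
  refine Option.bind_eq_some_iff.mpr ⟨h r, ?_, hm.map_pathδ hp⟩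
  rw [hm.1, List.getElem?_map, hr, Option.map_some]

theorem apply_eq_of_pathFrom (hm : MRSIsMorphism θ σ ρ h) {i : ℕ} {π : List Feats}
    {q q' : Nodes} (hq : σ.pathFrom i π = some q) (hq' : ρ.pathFrom i π = some q') :
    h q = q' :=
  Option.some_injective _ ((hm.map_pathFrom hq).symm.trans hq')

theorem Pi_subset (hm : MRSIsMorphism θ σ ρ h) : σ.Pi ⊆ ρ.Pi := by
  intro p hp
  obtain ⟨q, hq⟩ := Option.isSome_iff_exists.mp hp
  simp [MRS.Pi, hm.map_pathFrom hq]

theorem pathWeight_le (hm : MRSIsMorphism θ σ ρ h) {r : Types → ℕ} (hr : Monotone r)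
    (p : List Feats × ℕ) : σ.pathWeight r θ p ≤ ρ.pathWeight r θ p := by
  cases hp : σ.pathFrom p.2 p.1 with
  | none => simp [MRS.pathWeight, hp]
  | some q =>
    simpa [MRS.pathWeight, hp, hm.map_pathFrom hp] using
      hr (hm.2.2.1 q (σ.mem_Q_of_pathFrom hp))

theorem card_Q_add_ncard_Pi_le (hm : MRSIsMorphism θ σ ρ h) (hρ : ρ.Pi.Finite) :
    ρ.Q.card + σ.Pi.ncard ≤ σ.Q.card + ρ.Pi.ncard := by
  have hnew : ((ρ.Q : Set Nodes) \ h '' σ.Q).ncard ≤ (ρ.Pi \ σ.Pi).ncard := by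
    refine Set.ncard_le_ncard_of_forall_exists_eq_some (fun p => ρ.pathFrom p.2 p.1) hρ.sdiff ?_
    rintro q' ⟨hq', hnot⟩
    obtain ⟨p, hp, hpq⟩ := ρ.exists_mem_Pi_of_mem_Q hq'
    refine ⟨p, ⟨hp, fun hpσ => hnot ?_⟩, hpq⟩
    obtain ⟨q, hq⟩ := Option.isSome_iff_exists.mp hpσ
    exact ⟨q, σ.mem_Q_of_pathFrom hq, hm.apply_eq_of_pathFrom hq hpq⟩
  have := Set.ncard_le_ncard_sdiff_add_ncard (ρ.Q : Set Nodes) (h '' σ.Q)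
    (σ.Q.finite_toSet.image h)
  have := Set.ncard_image_le (f := h) σ.Q.finite_toSet
  have := Set.ncard_sdiff hm.Pi_subset (hρ.subset hm.Pi_subset)
  have := Set.ncard_le_ncard hm.Pi_subset hρ
  rw [Set.ncard_coe_finset] at *
  omega

theorem rank_le (hm : MRSIsMorphism θ σ ρ h) {r : Types → ℕ} (hr : Monotone r)
    (hρ : ρ.Pi.Finite) : σ.rank r θ ≤ ρ.rank r θ := by
  rw [σ.rank_eq_sum r θ (s := hρ.toFinset) (by simpa using hm.Pi_subset),
    ρ.rank_eq_sum r θ (s := hρ.toFinset) (by simp)]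
  have := Finset.sum_le_sum fun p (_ : p ∈ hρ.toFinset) => hm.pathWeight_le hr p
  have := hm.card_Q_add_ncard_Pi_le hρ
  have := Set.ncard_le_ncard hm.Pi_subset hρ
  omega

theorem eq_of_rank_eq (hm : MRSIsMorphism θ σ ρ h) {r : Types → ℕ} (hr : Monotone r)
    (hρ : ρ.Pi.Finite) (heq : σ.rank r θ = ρ.rank r θ) :
    σ.Pi = ρ.Pi ∧ σ.Q.card = ρ.Q.card ∧ ∀ p ∈ ρ.Pi, σ.pathWeight r θ p = ρ.pathWeight r θ p := by
  rw [σ.rank_eq_sum r θ (s := hρ.toFinset) (by simpa using hm.Pi_subset),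
    ρ.rank_eq_sum r θ (s := hρ.toFinset) (by simp)] at heq
  have hweight := Finset.sum_le_sum fun p (_ : p ∈ hρ.toFinset) => hm.pathWeight_le hr p
  have := hm.card_Q_add_ncard_Pi_le hρ
  have hPi := Set.ncard_le_ncard hm.Pi_subset hρ
  refine ⟨Set.eq_of_subset_of_ncard_le hm.Pi_subset (by omega) hρ, by omega, fun p hp => ?_⟩
  exact (Finset.sum_eq_sum_iff_of_le fun p _ => hm.pathWeight_le hr p).mp (by omega) p
    (hρ.mem_toFinset.mpr hp)

theorem exists_δ_of_Pi_subset (hm : MRSIsMorphism θ σ ρ h) (hPi : ρ.Pi ⊆ σ.Pi) {q q' : Nodes}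
    {f : Feats} (hq : q ∈ σ.Q) (hδ : ρ.δ (h q) f = some q') :
    ∃ q₃, σ.δ q f = some q₃ ∧ h q₃ = q' := by
  obtain ⟨⟨π, i⟩, -, hp⟩ := σ.exists_mem_Pi_of_mem_Q hq
  have hext : ρ.pathFrom i (π ++ [f]) = some q' := by
    simp [MRS.pathFrom_append, hm.map_pathFrom hp, pathδ, hδ]
  obtain ⟨q₃, hq₃⟩ := Option.isSome_iff_exists.mp (hPi (by simp [MRS.Pi, hext]) :
    (π ++ [f], i) ∈ σ.Pi)
  have hδσ : σ.δ q f = some q₃ := by simpa [MRS.pathFrom_append, hp, pathδ] using hq₃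
  exact ⟨q₃, hδσ, hm.apply_eq_of_pathFrom hq₃ hext⟩

theorem surjOn_of_Pi_subset (hm : MRSIsMorphism θ σ ρ h) (hPi : ρ.Pi ⊆ σ.Pi) :
    Set.SurjOn h σ.Q ρ.Q := by
  intro q' hq'
  obtain ⟨p, hp, hpq⟩ := ρ.exists_mem_Pi_of_mem_Q hq'
  obtain ⟨q, hq⟩ := Option.isSome_iff_exists.mp (hPi hp)
  exact ⟨q, σ.mem_Q_of_pathFrom hq, hm.apply_eq_of_pathFrom hq hpq⟩

theorem subsumes_symm_of_bijOn (hm : MRSIsMorphism θ σ ρ h) (hbij : Set.BijOn h σ.Q ρ.Q)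
    (hθ : ∀ q ∈ σ.Q, θ (h q) ≤ θ q) (hPi : ρ.Pi ⊆ σ.Pi) : MRSSubsumes θ ρ σ := by
  -- `Function.invFunOn` needs `Nonempty Nodes`; without nodes, `h` itself goes back.
  rcases isEmpty_or_nonempty Nodes with _ | _
  · exact ⟨h, Subsingleton.elim _ _, fun q => isEmptyElim q, fun q => isEmptyElim q,
      fun q => isEmptyElim q⟩
  set g := Function.invFunOn h σ.Q
  have hinv : Set.InvOn g h σ.Q ρ.Q := hbij.invOn_invFunOn
  have hg : Set.MapsTo g ρ.Q σ.Q := hbij.surjOn.mapsTo_invFunOn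
  refine ⟨g, ?_, fun q' hq' => hg hq', fun q' hq' => ?_, fun q₁ f q₂ hδ => ?_⟩
  · rw [hm.1, List.map_map]
    conv_lhs => rw [← List.map_id σ.roots]
    exact List.map_congr_left fun q hq => (hinv.1 (σ.roots_mem q hq)).symm
  · calc θ q' = θ (h (g q')) := by rw [hinv.2 hq']
      _ ≤ θ (g q') := hθ _ (hg hq')
  · have hq₁ : q₁ ∈ ρ.Q := ρ.dom q₁ f (by simp [hδ])
    obtain ⟨q₃, hδσ, rfl⟩ := hm.exists_δ_of_Pi_subset hPi (hg hq₁) (by rwa [hinv.2 hq₁])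
    rwa [hinv.1 (σ.closed _ f _ hδσ)]

theorem subsumes_symm_of_rank_eq (hm : MRSIsMorphism θ σ ρ h) {r : Types → ℕ}
    (hr : StrictMono r) (hρ : ρ.Pi.Finite) (heq : σ.rank r θ = ρ.rank r θ) :
    MRSSubsumes θ ρ σ := by
  obtain ⟨hPi, hcard, hweight⟩ := hm.eq_of_rank_eq hr.monotone hρ heq
  have hsurj := hm.surjOn_of_Pi_subset hPi.ge
  have hbij : Set.BijOn h σ.Q ρ.Q :=
    ⟨hm.mapsTo, Finset.injOn_of_surjOn_of_card_le h hm.mapsTo hsurj hcard.le, hsurj⟩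
  refine hm.subsumes_symm_of_bijOn hbij (fun q hq => ?_) hPi.ge
  obtain ⟨p, hp, hpq⟩ := σ.exists_mem_Pi_of_mem_Q hq
  have hrθ : r (θ q) = r (θ (h q)) := by
    simpa [MRS.pathWeight, hpq, hm.map_pathFrom hpq] using hweight p (hPi ▸ hp)
  exact ((hm.2.2.1 q hq).lt_or_eq.resolve_left fun hlt => (hr hlt).ne hrθ).ge

end MRSIsMorphism

theorem MRSStrictlySubsumes.rank_lt [PartialOrder Types] {θ : Nodes → Types}
    {σ ρ : MRS Nodes Feats} (hs : MRSStrictlySubsumes θ σ ρ) {r : Types → ℕ} (hr : StrictMono r)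
    (hρ : ρ.Pi.Finite) : σ.rank r θ < ρ.rank r θ :=
  let ⟨⟨_, hm⟩, hnot⟩ := hs
  (hm.rank_le hr.monotone hρ).lt_of_ne fun heq => hnot (hm.subsumes_symm_of_rank_eq hr hρ heq)

/-- Subsumption of acyclic MRSs is well-founded: strict subsumption
strictly increases the rank, and consequently there is no infinite strictly
decreasing chain of acyclic MRSs. -/
theorem mrs_acyclic_subsumption_well_founded [Finite Feats] [PartialOrder Types]
    (r : Types → ℕ) (hr : ∀ t t' : Types, t < t' → r t < r t')
    (θ : Nodes → Types) :
    (∀ σ ρ : MRS Nodes Feats, σ.Acyclic → ρ.Acyclic → MRSStrictlySubsumes θ σ ρ →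
      MRS.rank r θ σ < MRS.rank r θ ρ) ∧
    ¬ ∃ A : ℕ → MRS Nodes Feats,
      (∀ i, (A i).Acyclic) ∧ ∀ i, MRSStrictlySubsumes θ (A (i + 1)) (A i) := by
  have hr' : StrictMono r := fun t t' h => hr t t' h
  refine ⟨fun σ ρ _ hρ hs => hs.rank_lt hr' hρ.finite_Pi, ?_⟩
  rintro ⟨A, hA, hchain⟩
  obtain ⟨n, hn⟩ :=
    WellFounded.not_rel_apply_succ (r := (· < ·)) fun i => (MRS.rank r θ (A i)).toNat
  have := (hchain n).rank_lt hr' (hA n).finite_Pi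
  have := (A (n + 1)).rank_nonneg r θ (hA (n + 1)).finite_Pi
  omega
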